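/- arXiv:1508.05963 — 2 statements merged into one kernel-verified Lean document; each statement's English description precedes it below -/
import Mathlib

section
/- Let σ ≤ τ in the consecutive pattern poset 𝒫 with |τ| − |σ| ≥ 3. Then the interval [σ,τ] is disconnected if and only if σ straddles τ. -/
open scoped Classical

noncomputable section

/-- A permutation of length `n`, written in one-line notation as `τ 0, τ 1, …, τ (n-1)`. -/
abbrev Perm' (n : ℕ) := Equiv.Perm (Fin n)

/-- `σ` occurs in `τ` as a consecutive pattern at (0-indexed) starting position `i`:
the window `τ i, …, τ (i+m-1)` of adjacent entries is in the same relative order as `σ`. -/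
def OccursAt {m n : ℕ} (σ : Perm' m) (τ : Perm' n) (i : ℕ) : Prop :=
  ∃ h : i + m ≤ n, ∀ a b : Fin m,
    σ a < σ b ↔
      τ ⟨i + a, by have := a.isLt; omega⟩ < τ ⟨i + b, by have := b.isLt; omega⟩

/-- Consecutive pattern containment `σ ≤ τ`. -/
def PattLE {m n : ℕ} (σ : Perm' m) (τ : Perm' n) : Prop :=
  ∃ i, OccursAt σ τ i

/-- Permutations of arbitrary length: the carrier of the consecutive pattern poset. -/
abbrev PermS : Type := Σ n : ℕ, Perm' n

/-- The order of the consecutive pattern poset. -/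
def pLE (p q : PermS) : Prop := PattLE p.2 q.2

/-- The strict order of the consecutive pattern poset. -/
def pLT (p q : PermS) : Prop := pLE p q ∧ p ≠ q

/-- The covering relation of the consecutive pattern poset. -/
def pCovBy (p q : PermS) : Prop :=
  pLT p q ∧ ∀ r : PermS, pLT p r → pLT r q → False

/-- The open interval `(p,q)` in the consecutive pattern poset. -/
def openInterval (p q : PermS) : Set PermS := {r | pLT p r ∧ pLT r q}

/-- The Hasse diagram of the open interval `(p,q)`: vertices are the permutations strictly
between `p` and `q`, edges are the covering relations of the consecutive pattern poset. -/
def hasse (p q : PermS) : SimpleGraph (openInterval p q) :=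
  SimpleGraph.fromRel fun a b => pCovBy a.1 b.1

/-- The interval `[p,q]` is disconnected if the Hasse diagram of `(p,q)` is not connected. -/
def IntervalDisconnected (p q : PermS) : Prop := ¬ (hasse p q).Connected

/-- `window τ i m` is the reduction of the window of `τ` of length `m` starting at
(0-indexed) position `i`, i.e. the pattern `τ[i+1, i+m]` in 1-indexed notation. -/
def window {n : ℕ} (τ : Perm' n) (i m : ℕ) : Perm' m :=
  if h : i + m ≤ n then
    (Tuple.sort fun a : Fin m => τ ⟨i + a, by have := a.isLt; omega⟩)⁻¹
  else 1

/-- `τ` is monotone, i.e. equal to `12…n` or `n…21`. -/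
def IsMonotone {n : ℕ} (τ : Perm' n) : Prop :=
  (∀ a b : Fin n, a ≤ b → τ a ≤ τ b) ∨ (∀ a b : Fin n, a ≤ b → τ b ≤ τ a)

/-- `τ` has a bifix (a common proper prefix and proper suffix) of length `k`. -/
def HasBifixLen {n : ℕ} (τ : Perm' n) (k : ℕ) : Prop :=
  0 < k ∧ k < n ∧ window τ 0 k = window τ (n - k) k

/-- The length `|x(τ)|` of the exterior of `τ`, the longest bifix of `τ`. -/
def extLen {n : ℕ} (τ : Perm' n) : ℕ := Nat.findGreatest (HasBifixLen τ) n

/-- The exterior `x(τ)` of `τ`: its longest bifix. -/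
def extPerm {n : ℕ} (τ : Perm' n) : Perm' (extLen τ) := window τ 0 (extLen τ)

/-- The interior `i(τ) = τ[2,n-1]` of `τ`. -/
def intPerm {n : ℕ} (τ : Perm' n) : Perm' (n - 2) := window τ 1 (n - 2)

/-- `p` straddles `q`: `p < q`, `p` is both a prefix and a suffix of `q`,
and `p` has no other occurrence in `q`. -/
def Straddles (p q : PermS) : Prop :=
  pLT p q ∧ OccursAt p.2 q.2 0 ∧ OccursAt p.2 q.2 (q.1 - p.1) ∧
    ∀ i, OccursAt p.2 q.2 i → i = 0 ∨ i = q.1 - p.1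

/-- The interval `[p,q]` contains a non-trivial disconnected subinterval, i.e. a
subinterval `[a,b]` of rank at least 3 which is disconnected. -/
def HasNontrivDisconSub (p q : PermS) : Prop :=
  ∃ a b : PermS, pLE p a ∧ pLE a b ∧ pLE b q ∧ a.1 + 3 ≤ b.1 ∧ IntervalDisconnected a b

/-- The finite set of all permutations of length at most `N`. -/
def permsUpTo (N : ℕ) : Finset PermS :=
  (Finset.range (N + 1)).sigma fun n => (Finset.univ : Finset (Perm' n))

/-- The closed interval `[p,q]` of the consecutive pattern poset, as a finite set. -/
def intervalF (p q : PermS) : Finset PermS :=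
  (permsUpTo q.1).filter fun r => pLE p r ∧ pLE r q

/-- The number of elements of the interval `[σ,τ]` of rank `r`, i.e. of length `|σ| + r`. -/
def rankCard {m n : ℕ} (σ : Perm' m) (τ : Perm' n) (r : ℕ) : ℕ :=
  ((permsUpTo n).filter fun p => pLE ⟨m, σ⟩ p ∧ pLE p ⟨n, τ⟩ ∧ p.1 = m + r).card

/-- The direct sum `σ ⊕ π` of two permutations. -/
def dsum {m k : ℕ} (σ : Perm' m) (π : Perm' k) : Perm' (m + k) :=
  finSumFinEquiv.permCongr (σ.sumCongr π)

section Lemmas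

lemma perm_eq_of_lt_iff {n : ℕ} (σ τ : Perm' n) (h : ∀ a b, σ a < σ b ↔ τ a < τ b) : σ = τ := by
  have key : ∀ (ρ : Perm' n) (a : Fin n), ((ρ a : ℕ)) =
      (Finset.univ.filter fun b => ρ b < ρ a).card := by
    intro ρ a
    have himg : (Finset.univ.filter fun b => ρ b < ρ a) = (Finset.Iio (ρ a)).image ρ.symm := by
      ext b
      simp only [Finset.mem_filter, Finset.mem_univ, true_and, Finset.mem_image, Finset.mem_Iio]
      constructor
      · intro hb; exact ⟨ρ b, hb, ρ.symm_apply_apply b⟩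
      · rintro ⟨c, hc, rfl⟩; simpa using hc
    rw [himg, Finset.card_image_of_injective _ ρ.symm.injective, Fin.card_Iio]
  apply Equiv.ext
  intro a
  have h1 := key σ a
  have h2 := key τ a
  have hfe : (Finset.univ.filter fun b => σ b < σ a) = (Finset.univ.filter fun b => τ b < τ a) :=
    Finset.filter_congr fun b _ => by simpa using h b a
  apply Fin.ext
  rw [h1, h2, hfe]

lemma window_occursAt {n : ℕ} (τ : Perm' n) (i ℓ : ℕ) (h : i + ℓ ≤ n) :
    OccursAt (window τ i ℓ) τ i := by
  refine ⟨h, ?_⟩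
  have hw : window τ i ℓ =
      (Tuple.sort fun a : Fin ℓ => τ ⟨i + a, by have := a.isLt; omega⟩)⁻¹ := dif_pos h
  set f : Fin ℓ → Fin n := fun a => τ ⟨i + a, by have := a.isLt; omega⟩ with hf
  have hinj : Function.Injective f := by
    intro a b hab
    have h2 := τ.injective hab
    have h3 : i + (a : ℕ) = i + (b : ℕ) := congrArg Fin.val h2
    exact Fin.ext (by omega)
  have hmono : StrictMono (f ∘ Tuple.sort f) :=
    (Tuple.monotone_sort f).strictMono_of_injective (hinj.comp (Tuple.sort f).injective)
  intro a b
  have ha : f a = (f ∘ Tuple.sort f) ((Tuple.sort f)⁻¹ a) := by simp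
  have hb : f b = (f ∘ Tuple.sort f) ((Tuple.sort f)⁻¹ b) := by simp
  rw [hw]
  show (Tuple.sort f)⁻¹ a < (Tuple.sort f)⁻¹ b ↔ f a < f b
  rw [ha, hb, hmono.lt_iff_lt]

lemma occursAt_trans {m ℓ n : ℕ} {σ : Perm' m} {π : Perm' ℓ} {τ : Perm' n} {t i : ℕ}
    (h1 : OccursAt σ π t) (h2 : OccursAt π τ i) : OccursAt σ τ (i + t) := by
  obtain ⟨hb1, hiff1⟩ := h1
  obtain ⟨hb2, hiff2⟩ := h2
  refine ⟨by omega, ?_⟩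
  intro a b
  rw [hiff1 a b, hiff2 ⟨t + a, by have := a.isLt; omega⟩ ⟨t + b, by have := b.isLt; omega⟩]
  constructor <;> intro h <;> (convert h using 2 <;> exact Fin.ext (by simp; omega))

lemma occursAt_window {ℓ n : ℕ} {π : Perm' ℓ} {τ : Perm' n} {i i' ℓ' : ℕ}
    (h : OccursAt π τ i) (h1 : i' ≤ i) (h2 : i + ℓ ≤ i' + ℓ') (h3 : i' + ℓ' ≤ n) :
    OccursAt π (window τ i' ℓ') (i - i') := by
  obtain ⟨hb, hiff⟩ := h
  obtain ⟨_, hW⟩ := window_occursAt τ i' ℓ' h3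
  refine ⟨by omega, ?_⟩
  intro a b
  rw [hiff a b, hW ⟨i - i' + a, by have := a.isLt; omega⟩ ⟨i - i' + b, by have := b.isLt; omega⟩]
  constructor <;> intro h <;> (convert h using 2 <;> exact Fin.ext (by simp; omega))

end Lemmas
lemma pLE_refl (p : PermS) : pLE p p := by
  refine ⟨0, le_of_eq (Nat.zero_add _), fun a b => ?_⟩
  constructor <;> intro h <;> (convert h using 2 <;> exact Fin.ext (by simp))

lemma pLE_trans {p q r : PermS} (h1 : pLE p q) (h2 : pLE q r) : pLE p r := by
  obtain ⟨t, ht⟩ := h1; obtain ⟨i, hi⟩ := h2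
  exact ⟨i + t, occursAt_trans ht hi⟩

lemma pLE_length {p q : PermS} (h : pLE p q) : p.1 ≤ q.1 := by
  obtain ⟨i, hi, _⟩ := h; omega

lemma pLE_eq_of_length {p q : PermS} (h : pLE p q) (hl : p.1 = q.1) : p = q := by
  obtain ⟨n₁, σ⟩ := p
  obtain ⟨n₂, τ⟩ := q
  obtain rfl : n₁ = n₂ := hl
  obtain ⟨i, hb, hiff⟩ := h
  obtain rfl : i = 0 := by have hb' : i + n₁ ≤ n₁ := hb; omega
  have : σ = τ := by
    apply perm_eq_of_lt_iff
    intro a b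
    rw [hiff a b]
    constructor <;> intro h <;> (convert h using 2 <;> exact Fin.ext (by simp))
  rw [this]

lemma pLT_length {p q : PermS} (h : pLT p q) : p.1 < q.1 := by
  rcases Nat.lt_or_ge p.1 q.1 with h' | h'
  · exact h'
  · exact absurd (pLE_eq_of_length h.1 (le_antisymm (pLE_length h.1) h')) h.2

lemma pLT_of_pLE_length {p q : PermS} (h : pLE p q) (hl : p.1 < q.1) : pLT p q :=
  ⟨h, fun e => by rw [e] at hl; omega⟩

lemma pCovBy_of_length {p q : PermS} (h : pLT p q) (hl : q.1 = p.1 + 1) : pCovBy p q :=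
  ⟨h, fun r h1 h2 => by have := pLT_length h1; have := pLT_length h2; omega⟩

lemma walk_pred {V : Type*} {G : SimpleGraph V} (Φ : V → Prop)
    (h : ∀ a b, G.Adj a b → Φ a → Φ b) : ∀ {u v : V}, G.Reachable u v → Φ u → Φ v := by
  intro u v hr
  obtain ⟨w⟩ := hr
  induction w with
  | nil => exact id
  | cons hadj _ ih => exact fun hu => ih (h _ _ hadj hu)

lemma reach_chain {σt τt : PermS} (k : ℕ) :
    ∀ (u v : openInterval σt τt), pLE u.1 v.1 → v.1.1 = u.1.1 + k →
    (hasse σt τt).Reachable u v := by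
  induction k with
  | zero =>
    intro u v h hk
    have : u = v := Subtype.ext (pLE_eq_of_length h (by omega))
    rw [this]
  | succ k ih =>
    intro u v h hk
    obtain ⟨j, hocc⟩ := h
    have hb : j + u.1.1 ≤ v.1.1 := hocc.1
    have hul := pLT_length u.2.1
    have hvl := pLT_length v.2.2
    have hW1' : OccursAt u.1.2 (window v.1.2 (min j (v.1.1 - u.1.1 - 1)) (u.1.1 + 1))
        (j - min j (v.1.1 - u.1.1 - 1)) :=
      occursAt_window hocc (by omega) (by omega) (by omega)
    have hW2' : OccursAt (window v.1.2 (min j (v.1.1 - u.1.1 - 1)) (u.1.1 + 1)) v.1.2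
        (min j (v.1.1 - u.1.1 - 1)) :=
      window_occursAt _ _ _ (by omega)
    have hW1 : pLE u.1 ⟨u.1.1 + 1, window v.1.2 (min j (v.1.1 - u.1.1 - 1)) (u.1.1 + 1)⟩ :=
      ⟨_, hW1'⟩
    have hW2 : pLE ⟨u.1.1 + 1, window v.1.2 (min j (v.1.1 - u.1.1 - 1)) (u.1.1 + 1)⟩ v.1 :=
      ⟨_, hW2'⟩
    have huW : pLT u.1 ⟨u.1.1 + 1, window v.1.2 (min j (v.1.1 - u.1.1 - 1)) (u.1.1 + 1)⟩ :=
      pLT_of_pLE_length hW1 (by show u.1.1 < u.1.1 + 1; omega)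
    have hσW : pLT σt ⟨u.1.1 + 1, window v.1.2 (min j (v.1.1 - u.1.1 - 1)) (u.1.1 + 1)⟩ :=
      pLT_of_pLE_length (pLE_trans u.2.1.1 hW1)
        (by show σt.1 < u.1.1 + 1; have := pLT_length u.2.1; omega)
    have hWτ : pLT (⟨u.1.1 + 1, window v.1.2 (min j (v.1.1 - u.1.1 - 1)) (u.1.1 + 1)⟩ : PermS) τt :=
      pLT_of_pLE_length (pLE_trans hW2 v.2.2.1) (by show u.1.1 + 1 < τt.1; omega)
    have hadj : (hasse σt τt).Adj u
        ⟨⟨u.1.1 + 1, window v.1.2 (min j (v.1.1 - u.1.1 - 1)) (u.1.1 + 1)⟩, hσW, hWτ⟩ := by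
      refine ⟨?_, Or.inl (pCovBy_of_length huW rfl)⟩
      intro e
      have h2 := congrArg (fun x => x.1.1) e
      have h3 : u.1.1 = u.1.1 + 1 := h2
      omega
    exact hadj.reachable.trans
      (ih ⟨⟨u.1.1 + 1, window v.1.2 (min j (v.1.1 - u.1.1 - 1)) (u.1.1 + 1)⟩, hσW, hWτ⟩ v hW2
        (by show v.1.1 = (u.1.1 + 1) + k; omega))
lemma le_PP {l n : ℕ} {π : Perm' l} {τ : Perm' n} {i : ℕ} (h : OccursAt π τ i)
    (h2 : i + l ≤ n - 1) : pLE ⟨l, π⟩ ⟨n - 1, window τ 0 (n - 1)⟩ := by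
  have h' : OccursAt π (window τ 0 (n - 1)) (i - 0) :=
    occursAt_window h (Nat.zero_le _) (by have := h.1; omega) (by have := h.1; omega)
  exact ⟨i - 0, h'⟩

lemma le_SS {l n : ℕ} {π : Perm' l} {τ : Perm' n} {i : ℕ} (h : OccursAt π τ i)
    (h1 : 1 ≤ i) : pLE ⟨l, π⟩ ⟨n - 1, window τ 1 (n - 1)⟩ := by
  have h' : OccursAt π (window τ 1 (n - 1)) (i - 1) :=
    occursAt_window h h1 (by have := h.1; omega) (by have := h.1; omega)
  exact ⟨i - 1, h'⟩

lemma dichot {l n : ℕ} {π : Perm' l} {τ : Perm' n} (h : PattLE π τ) (hl : l < n) :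
    pLE ⟨l, π⟩ ⟨n - 1, window τ 0 (n - 1)⟩ ∨ pLE ⟨l, π⟩ ⟨n - 1, window τ 1 (n - 1)⟩ := by
  obtain ⟨i, hi⟩ := h
  have hb := hi.1
  by_cases hc : i + l ≤ n - 1
  · exact Or.inl (le_PP hi hc)
  · exact Or.inr (le_SS hi (by omega))

lemma occ_of_le_PP {l n : ℕ} {π : Perm' l} {τ : Perm' n}
    (h : PattLE π (window τ 0 (n - 1))) (hn : 1 ≤ n) :
    ∃ a, OccursAt π τ a ∧ a + l ≤ n - 1 := by
  obtain ⟨a, ha⟩ := h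
  have hb := ha.1
  exact ⟨0 + a, occursAt_trans ha (window_occursAt τ 0 (n - 1) (by omega)), by omega⟩

lemma occ_of_le_SS {l n : ℕ} {π : Perm' l} {τ : Perm' n}
    (h : PattLE π (window τ 1 (n - 1))) (hn : 1 ≤ n) :
    ∃ a, OccursAt π τ (1 + a) ∧ (1 + a) + l ≤ n := by
  obtain ⟨a, ha⟩ := h
  have hb := ha.1
  exact ⟨a, occursAt_trans ha (window_occursAt τ 1 (n - 1) (by omega)), by omega⟩
/-- Theorem 3.2: for `σ ≤ τ` with `|τ| - |σ| ≥ 3`, the interval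
`[σ,τ]` is disconnected if and only if `σ` straddles `τ`. -/

theorem stmt3 {m n : ℕ} (hm : 1 ≤ m) (σ : Perm' m) (τ : Perm' n)
    (hle : PattLE σ τ) (h3 : m + 3 ≤ n) :
    IntervalDisconnected ⟨m, σ⟩ ⟨n, τ⟩ ↔ Straddles ⟨m, σ⟩ ⟨n, τ⟩ := by
  have hle' : pLE ⟨m, σ⟩ ⟨n, τ⟩ := hle
  have hστ : pLT ⟨m, σ⟩ ⟨n, τ⟩ := pLT_of_pLE_length hle' (by show m < n; omega)
  have hPPτ : pLT (⟨n - 1, window τ 0 (n - 1)⟩ : PermS) ⟨n, τ⟩ :=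
    pLT_of_pLE_length ⟨0, window_occursAt τ 0 (n - 1) (by omega)⟩ (by show n - 1 < n; omega)
  have hSSτ : pLT (⟨n - 1, window τ 1 (n - 1)⟩ : PermS) ⟨n, τ⟩ :=
    pLT_of_pLE_length ⟨1, window_occursAt τ 1 (n - 1) (by omega)⟩ (by show n - 1 < n; omega)
  have reach_to : ∀ (Q : PermS) (hQ : Q ∈ openInterval ⟨m, σ⟩ ⟨n, τ⟩)
      (v : ↑(openInterval ⟨m, σ⟩ ⟨n, τ⟩)), pLE v.1 Q →
      (hasse ⟨m, σ⟩ ⟨n, τ⟩).Reachable v ⟨Q, hQ⟩ := by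
    intro Q hQ v hv
    refine reach_chain (Q.1 - v.1.1) v ⟨Q, hQ⟩ hv ?_
    show Q.1 = v.1.1 + (Q.1 - v.1.1)
    have := pLE_length hv
    omega
  by_cases hint : ∃ i, OccursAt σ τ i ∧ 1 ≤ i ∧ i + m ≤ n - 1
  · obtain ⟨i, hi, hi1, hi2⟩ := hint
    have hib := hi.1
    have hσPP : pLT ⟨m, σ⟩ (⟨n - 1, window τ 0 (n - 1)⟩ : PermS) :=
      pLT_of_pLE_length (le_PP hi hi2) (by show m < n - 1; omega)
    have hσSS : pLT ⟨m, σ⟩ (⟨n - 1, window τ 1 (n - 1)⟩ : PermS) :=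
      pLT_of_pLE_length (le_SS hi hi1) (by show m < n - 1; omega)
    have mPP : (⟨n - 1, window τ 0 (n - 1)⟩ : PermS) ∈ openInterval ⟨m, σ⟩ ⟨n, τ⟩ := ⟨hσPP, hPPτ⟩
    have mSS : (⟨n - 1, window τ 1 (n - 1)⟩ : PermS) ∈ openInterval ⟨m, σ⟩ ⟨n, τ⟩ := ⟨hσSS, hSSτ⟩
    have hWocc : OccursAt (window τ (i - 1) (m + 1)) τ (i - 1) :=
      window_occursAt τ (i - 1) (m + 1) (by omega)
    have hW'occ : OccursAt (window τ i (m + 1)) τ i :=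
      window_occursAt τ i (m + 1) (by omega)
    have hVocc : OccursAt (window τ (i - 1) (m + 2)) τ (i - 1) :=
      window_occursAt τ (i - 1) (m + 2) (by omega)
    have hσW1 : OccursAt σ (window τ (i - 1) (m + 1)) (i - (i - 1)) :=
      occursAt_window hi (by omega) (by omega) (by omega)
    have hσW'1 : OccursAt σ (window τ i (m + 1)) (i - i) :=
      occursAt_window hi (by omega) (by omega) (by omega)
    have hσV1 : OccursAt σ (window τ (i - 1) (m + 2)) (i - (i - 1)) :=
      occursAt_window hi (by omega) (by omega) (by omega)
    have hWV1 : OccursAt (window τ (i - 1) (m + 1)) (window τ (i - 1) (m + 2)) ((i - 1) - (i - 1)) :=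
      occursAt_window hWocc (by omega) (by omega) (by omega)
    have hW'V1 : OccursAt (window τ i (m + 1)) (window τ (i - 1) (m + 2)) (i - (i - 1)) :=
      occursAt_window hW'occ (by omega) (by omega) (by omega)
    have hWV : pLE (⟨m + 1, window τ (i - 1) (m + 1)⟩ : PermS) (⟨m + 2, window τ (i - 1) (m + 2)⟩ : PermS) := ⟨_, hWV1⟩
    have hW'V : pLE (⟨m + 1, window τ i (m + 1)⟩ : PermS) (⟨m + 2, window τ (i - 1) (m + 2)⟩ : PermS) := ⟨_, hW'V1⟩
    have hWPP : pLE (⟨m + 1, window τ (i - 1) (m + 1)⟩ : PermS) (⟨n - 1, window τ 0 (n - 1)⟩ : PermS) := le_PP hWocc (by omega)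
    have hW'SS : pLE (⟨m + 1, window τ i (m + 1)⟩ : PermS) (⟨n - 1, window τ 1 (n - 1)⟩ : PermS) := le_SS hW'occ hi1
    have mW : (⟨m + 1, window τ (i - 1) (m + 1)⟩ : PermS) ∈ openInterval ⟨m, σ⟩ ⟨n, τ⟩ :=
      ⟨pLT_of_pLE_length ⟨_, hσW1⟩ (by show m < m + 1; omega),
       pLT_of_pLE_length ⟨i - 1, hWocc⟩ (by show m + 1 < n; omega)⟩
    have mW' : (⟨m + 1, window τ i (m + 1)⟩ : PermS) ∈ openInterval ⟨m, σ⟩ ⟨n, τ⟩ :=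
      ⟨pLT_of_pLE_length ⟨_, hσW'1⟩ (by show m < m + 1; omega),
       pLT_of_pLE_length ⟨i, hW'occ⟩ (by show m + 1 < n; omega)⟩
    have mV : (⟨m + 2, window τ (i - 1) (m + 2)⟩ : PermS) ∈ openInterval ⟨m, σ⟩ ⟨n, τ⟩ :=
      ⟨pLT_of_pLE_length ⟨_, hσV1⟩ (by show m < m + 2; omega),
       pLT_of_pLE_length ⟨i - 1, hVocc⟩ (by show m + 2 < n; omega)⟩
    have r1 : (hasse ⟨m, σ⟩ ⟨n, τ⟩).Reachable ⟨(⟨m + 1, window τ (i - 1) (m + 1)⟩ : PermS), mW⟩ ⟨(⟨n - 1, window τ 0 (n - 1)⟩ : PermS), mPP⟩ :=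
      reach_to (⟨n - 1, window τ 0 (n - 1)⟩ : PermS) mPP ⟨(⟨m + 1, window τ (i - 1) (m + 1)⟩ : PermS), mW⟩ hWPP
    have r2 : (hasse ⟨m, σ⟩ ⟨n, τ⟩).Reachable ⟨(⟨m + 1, window τ (i - 1) (m + 1)⟩ : PermS), mW⟩ ⟨(⟨m + 2, window τ (i - 1) (m + 2)⟩ : PermS), mV⟩ :=
      reach_chain 1 ⟨(⟨m + 1, window τ (i - 1) (m + 1)⟩ : PermS), mW⟩ ⟨(⟨m + 2, window τ (i - 1) (m + 2)⟩ : PermS), mV⟩ hWV rfl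
    have r3 : (hasse ⟨m, σ⟩ ⟨n, τ⟩).Reachable ⟨(⟨m + 1, window τ i (m + 1)⟩ : PermS), mW'⟩ ⟨(⟨m + 2, window τ (i - 1) (m + 2)⟩ : PermS), mV⟩ :=
      reach_chain 1 ⟨(⟨m + 1, window τ i (m + 1)⟩ : PermS), mW'⟩ ⟨(⟨m + 2, window τ (i - 1) (m + 2)⟩ : PermS), mV⟩ hW'V rfl
    have r4 : (hasse ⟨m, σ⟩ ⟨n, τ⟩).Reachable ⟨(⟨m + 1, window τ i (m + 1)⟩ : PermS), mW'⟩ ⟨(⟨n - 1, window τ 1 (n - 1)⟩ : PermS), mSS⟩ :=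
      reach_to (⟨n - 1, window τ 1 (n - 1)⟩ : PermS) mSS ⟨(⟨m + 1, window τ i (m + 1)⟩ : PermS), mW'⟩ hW'SS
    have rPS : (hasse ⟨m, σ⟩ ⟨n, τ⟩).Reachable ⟨(⟨n - 1, window τ 0 (n - 1)⟩ : PermS), mPP⟩ ⟨(⟨n - 1, window τ 1 (n - 1)⟩ : PermS), mSS⟩ :=
      r1.symm.trans (r2.trans (r3.symm.trans r4))
    have hconn : (hasse ⟨m, σ⟩ ⟨n, τ⟩).Connected := by
      rw [SimpleGraph.connected_iff_exists_forall_reachable]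
      refine ⟨⟨(⟨n - 1, window τ 0 (n - 1)⟩ : PermS), mPP⟩, ?_⟩
      intro w
      rcases dichot w.2.2.1 (pLT_length w.2.2) with hw | hw
      · exact (reach_to (⟨n - 1, window τ 0 (n - 1)⟩ : PermS) mPP w hw).symm
      · exact rPS.trans (reach_to (⟨n - 1, window τ 1 (n - 1)⟩ : PermS) mSS w hw).symm
    constructor
    · intro hd; exact absurd hconn hd
    · intro hstr
      rcases hstr.2.2.2 i hi with h0 | h0
      · omega
      · have h0' : i = n - m := h0
        omega
  · have hzn : ∀ i, OccursAt σ τ i → i = 0 ∨ i = n - m := by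
      intro i hi
      have hb := hi.1
      by_contra hcon
      push_neg at hcon
      exact hint ⟨i, hi, by omega, by omega⟩
    by_cases h0 : OccursAt σ τ 0
    · by_cases hnm : OccursAt σ τ (n - m)
      · have hstr : Straddles ⟨m, σ⟩ ⟨n, τ⟩ :=
          ⟨hστ, h0, hnm, fun i hi => hzn i hi⟩
        have hσPP : pLT ⟨m, σ⟩ (⟨n - 1, window τ 0 (n - 1)⟩ : PermS) :=
          pLT_of_pLE_length (le_PP h0 (by omega)) (by show m < n - 1; omega)
        have hσSS : pLT ⟨m, σ⟩ (⟨n - 1, window τ 1 (n - 1)⟩ : PermS) :=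
          pLT_of_pLE_length (le_SS hnm (by omega)) (by show m < n - 1; omega)
        have mPP : (⟨n - 1, window τ 0 (n - 1)⟩ : PermS) ∈ openInterval ⟨m, σ⟩ ⟨n, τ⟩ := ⟨hσPP, hPPτ⟩
        have mSS : (⟨n - 1, window τ 1 (n - 1)⟩ : PermS) ∈ openInterval ⟨m, σ⟩ ⟨n, τ⟩ := ⟨hσSS, hSSτ⟩
        have key2 : ∀ v : ↑(openInterval ⟨m, σ⟩ ⟨n, τ⟩),
            pLE v.1 (⟨n - 1, window τ 0 (n - 1)⟩ : PermS) → pLE v.1 (⟨n - 1, window τ 1 (n - 1)⟩ : PermS) → False := by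
          intro v hP hS
          obtain ⟨a, ha⟩ := hP
          obtain ⟨b, hb⟩ := hS
          obtain ⟨t, ht⟩ := v.2.1.1
          have hmlt : m < v.1.1 := pLT_length v.2.1
          have hva := occursAt_trans ha (window_occursAt τ 0 (n - 1) (by omega))
          have hvb := occursAt_trans hb (window_occursAt τ 1 (n - 1) (by omega))
          have hσa := occursAt_trans ht hva
          have hσb := occursAt_trans ht hvb
          have hba : a + v.1.1 ≤ n - 1 := ha.1
          have hbb : b + v.1.1 ≤ n - 1 := hb.1
          have htb : t + m ≤ v.1.1 := ht.1
          have e1 := hzn _ hσa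
          have e2 := hzn _ hσb
          omega
        have hpres : ∀ a b, (hasse ⟨m, σ⟩ ⟨n, τ⟩).Adj a b →
            pLE a.1 (⟨n - 1, window τ 0 (n - 1)⟩ : PermS) → pLE b.1 (⟨n - 1, window τ 0 (n - 1)⟩ : PermS) := by
          intro a b hadj ha
          have hadj' : a ≠ b ∧ (pCovBy a.1 b.1 ∨ pCovBy b.1 a.1) := hadj
          rcases dichot b.2.2.1 (pLT_length b.2.2) with hb | hb
          · exact hb
          · rcases hadj'.2 with hc | hc
            · exact (key2 a ha (pLE_trans hc.1.1 hb)).elim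
            · exact pLE_trans hc.1.1 ha
        constructor
        · intro _; exact hstr
        · intro _
          intro hconn
          have hr := hconn.preconnected ⟨(⟨n - 1, window τ 0 (n - 1)⟩ : PermS), mPP⟩ ⟨(⟨n - 1, window τ 1 (n - 1)⟩ : PermS), mSS⟩
          have hfin := walk_pred (fun v => pLE v.1 (⟨n - 1, window τ 0 (n - 1)⟩ : PermS)) hpres hr (pLE_refl (⟨n - 1, window τ 0 (n - 1)⟩ : PermS))
          exact key2 ⟨(⟨n - 1, window τ 1 (n - 1)⟩ : PermS), mSS⟩ hfin (pLE_refl (⟨n - 1, window τ 1 (n - 1)⟩ : PermS))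
      · have hnSS : ¬ pLE ⟨m, σ⟩ (⟨n - 1, window τ 1 (n - 1)⟩ : PermS) := by
          intro hS
          obtain ⟨a, ha, hab⟩ := occ_of_le_SS hS (by omega)
          rcases hzn _ ha with h | h
          · omega
          · exact hnm (h ▸ ha)
        have hσPP : pLT ⟨m, σ⟩ (⟨n - 1, window τ 0 (n - 1)⟩ : PermS) :=
          pLT_of_pLE_length (le_PP h0 (by have := h0.1; omega)) (by show m < n - 1; omega)
        have mPP : (⟨n - 1, window τ 0 (n - 1)⟩ : PermS) ∈ openInterval ⟨m, σ⟩ ⟨n, τ⟩ := ⟨hσPP, hPPτ⟩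
        have hconn : (hasse ⟨m, σ⟩ ⟨n, τ⟩).Connected := by
          rw [SimpleGraph.connected_iff_exists_forall_reachable]
          refine ⟨⟨(⟨n - 1, window τ 0 (n - 1)⟩ : PermS), mPP⟩, ?_⟩
          intro w
          rcases dichot w.2.2.1 (pLT_length w.2.2) with hw | hw
          · exact (reach_to (⟨n - 1, window τ 0 (n - 1)⟩ : PermS) mPP w hw).symm
          · exact absurd (pLE_trans w.2.1.1 hw) hnSS
        constructor
        · intro hd; exact absurd hconn hd
        · intro hstr; exact absurd hstr.2.2.1 hnm
    · have hnm : OccursAt σ τ (n - m) := by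
        obtain ⟨i, hi⟩ := hle
        rcases hzn i hi with h | h
        · exact absurd (h ▸ hi) h0
        · exact h ▸ hi
      have hnPP : ¬ pLE ⟨m, σ⟩ (⟨n - 1, window τ 0 (n - 1)⟩ : PermS) := by
        intro hP
        obtain ⟨a, ha, hab⟩ := occ_of_le_PP hP (by omega)
        have hab' : a + m ≤ n - 1 := hab
        rcases hzn _ ha with h | h
        · exact h0 (h ▸ ha)
        · omega
      have hσSS : pLT ⟨m, σ⟩ (⟨n - 1, window τ 1 (n - 1)⟩ : PermS) :=
        pLT_of_pLE_length (le_SS hnm (by omega)) (by show m < n - 1; omega)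
      have mSS : (⟨n - 1, window τ 1 (n - 1)⟩ : PermS) ∈ openInterval ⟨m, σ⟩ ⟨n, τ⟩ := ⟨hσSS, hSSτ⟩
      have hconn : (hasse ⟨m, σ⟩ ⟨n, τ⟩).Connected := by
        rw [SimpleGraph.connected_iff_exists_forall_reachable]
        refine ⟨⟨(⟨n - 1, window τ 1 (n - 1)⟩ : PermS), mSS⟩, ?_⟩
        intro w
        rcases dichot w.2.2.1 (pLT_length w.2.2) with hw | hw
        · exact absurd (pLE_trans w.2.1.1 hw) hnPP
        · exact (reach_to (⟨n - 1, window τ 1 (n - 1)⟩ : PermS) mSS w hw).symm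
      constructor
      · intro hd; exact absurd hconn hd
      · intro hstr; exact absurd hstr.2.1 h0

end
end

section
/- Let σ ≤ τ in the consecutive pattern poset 𝒫, let N = |τ| − |σ|, and for 0 ≤ r ≤ N let E_r = {π : σ ≤ π ≤ τ, |π| = |σ| + r}. Then for every 0 ≤ r ≤ N−1 and every subset S ⊆ E_r with |S| ≤ N − r, there exists an injection f : S → E_{r+1} such that π < f(π) for every π ∈ S. -/
open scoped Classical

noncomputable section

/-!
Write `L p` for the position of the first occurrence of `p` in `τ`. The elements of `S` have
length `k = |σ| + r`, so their first occurrences lie among the `n - k + 1` positions `0, …, n - k`;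
since `|S| ≤ n - k`, some position `t` is the first occurrence of no element of `S`. Extend the
first occurrence of each `p ∈ S` by one entry of `τ`, to the right if `L p < t` and to the left if
`L p > t`, and let `f p` be the pattern of that window. If `f p = f q`, then `q` also occurs inside
the window of `p` at the same offset as in its own window, so minimality of first occurrences forces
the two windows to start at the same position. As the windows never cross the gap `t`, that start
determines `L p = L q`, and a pattern is determined by its length and one occurrence.
-/

open Function

theorem Tuple.eq_inv_sort_iff {α : Type*} [LinearOrder α] {k : ℕ} {g : Fin k → α}
    (hg : Injective g) {ρ : Equiv.Perm (Fin k)} :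
    ρ = (Tuple.sort g)⁻¹ ↔ ∀ a b, ρ a < ρ b ↔ g a < g b := by
  rw [← inv_eq_iff_eq_inv, Tuple.eq_sort_iff]
  constructor
  · rintro ⟨hmono, -⟩ a b
    have hsm : StrictMono (g ∘ ⇑ρ⁻¹) := hmono.strictMono_of_injective (hg.comp ρ⁻¹.injective)
    simpa using (hsm.lt_iff_lt (a := ρ a) (b := ρ b)).symm
  · intro h
    refine ⟨StrictMono.monotone fun x y hxy => ?_, fun x y hxy hgxy => ?_⟩
    · exact (h _ _).1 (by simpa using hxy)
    · exact absurd (ρ⁻¹.injective (hg hgxy)) hxy.ne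

section Occurrences

variable {m n : ℕ}

theorem occursAt_iff_eq_window {ρ : Perm' m} {τ : Perm' n} {i : ℕ} :
    OccursAt ρ τ i ↔ ∃ _ : i + m ≤ n, ρ = window τ i m := by
  refine exists_congr fun h => ?_
  rw [window, dif_pos h, Tuple.eq_inv_sort_iff]
  intro a b hab
  have := congrArg Fin.val (τ.injective hab)
  exact Fin.ext (by simpa using this)

theorem occursAt_window_s8 (τ : Perm' n) {i : ℕ} (h : i + m ≤ n) : OccursAt (window τ i m) τ i :=
  occursAt_iff_eq_window.2 ⟨h, rfl⟩

theorem OccursAt.eq_window {ρ : Perm' m} {τ : Perm' n} {i : ℕ} (h : OccursAt ρ τ i) :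
    ρ = window τ i m :=
  (occursAt_iff_eq_window.1 h).2

theorem OccursAt.trans {l : ℕ} {ρ : Perm' m} {π : Perm' l} {τ : Perm' n} {i j : ℕ}
    (h₁ : OccursAt ρ π i) (h₂ : OccursAt π τ j) : OccursAt ρ τ (j + i) := by
  obtain ⟨hil, h₁⟩ := h₁
  obtain ⟨hjn, h₂⟩ := h₂
  refine ⟨by omega, fun a b => (h₁ a b).trans ?_⟩
  convert h₂ ⟨i + a, by omega⟩ ⟨i + b, by omega⟩ using 3 <;> simp [add_assoc]

theorem OccursAt.in_window {l : ℕ} {ρ : Perm' m} {τ : Perm' n} {i j : ℕ}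
    (h : OccursAt ρ τ (j + i)) (hi : i + m ≤ l) (hl : j + l ≤ n) :
    OccursAt ρ (window τ j l) i := by
  obtain ⟨_, hρ⟩ := h
  have hw := (occursAt_window_s8 τ hl).2
  refine ⟨hi, fun a b => (hρ a b).trans ?_⟩
  convert (hw ⟨i + a, by omega⟩ ⟨i + b, by omega⟩).symm using 3 <;> simp [add_assoc]

theorem PermS.eq_of_occursAt {τ : Perm' n} {p q : PermS} {i : ℕ} (hpq : p.1 = q.1)
    (hp : OccursAt p.2 τ i) (hq : OccursAt q.2 τ i) : p = q := by
  obtain ⟨k, π⟩ := p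
  obtain ⟨_, ρ⟩ := q
  dsimp only at hpq
  subst hpq
  rw [show π = ρ from hp.eq_window.trans hq.eq_window.symm]

theorem pLE_trans_s8 {p q w : PermS} (h₁ : pLE p q) (h₂ : pLE q w) : pLE p w := by
  obtain ⟨i, hi⟩ := h₁
  obtain ⟨j, hj⟩ := h₂
  exact ⟨j + i, hi.trans hj⟩

end Occurrences

section Extension

variable {n : ℕ} (τ : Perm' n)

def firstOccurrence (p : PermS) : ℕ := sInf {i | OccursAt p.2 τ i}

variable {τ}

theorem occursAt_firstOccurrence {p : PermS} (h : pLE p ⟨n, τ⟩) :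
    OccursAt p.2 τ (firstOccurrence τ p) :=
  Nat.sInf_mem h

theorem firstOccurrence_le {p : PermS} {i : ℕ} (h : OccursAt p.2 τ i) :
    firstOccurrence τ p ≤ i :=
  Nat.sInf_le h

theorem firstOccurrence_add_le {p : PermS} (h : pLE p ⟨n, τ⟩) :
    firstOccurrence τ p + p.1 ≤ n :=
  (occursAt_firstOccurrence h).1

theorem PermS.eq_of_firstOccurrence_eq {p q : PermS} (hp : pLE p ⟨n, τ⟩) (hq : pLE q ⟨n, τ⟩)
    (hpq : p.1 = q.1) (h : firstOccurrence τ p = firstOccurrence τ q) : p = q :=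
  PermS.eq_of_occursAt hpq (occursAt_firstOccurrence hp) (h ▸ occursAt_firstOccurrence hq)

/-- The start of the window of length `|p| + 1` around an occurrence of `p` at `i`, extending it
to the right if `i < t` and to the left otherwise. -/
def extensionStart (t i : ℕ) : ℕ := if i < t then i else i - 1

theorem extensionStart_le (t i : ℕ) : extensionStart t i ≤ i := by
  unfold extensionStart; split_ifs <;> omega

theorem le_extensionStart_add_one (t i : ℕ) : i ≤ extensionStart t i + 1 := by
  unfold extensionStart; split_ifs <;> omega

theorem extensionStart_add_le {t i k : ℕ} (hit : i ≠ t) (hi : i + k ≤ n) (ht : t + k ≤ n) :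
    extensionStart t i + (k + 1) ≤ n := by
  unfold extensionStart; split_ifs <;> omega

theorem extensionStart_injOn (t : ℕ) : Set.InjOn (extensionStart t) {t}ᶜ := by
  intro i hi j hj h
  simp only [Set.mem_compl_iff, Set.mem_singleton_iff] at hi hj
  unfold extensionStart at h; split_ifs at h <;> omega

variable (τ)

def extendAwayFrom (t : ℕ) (p : PermS) : PermS :=
  ⟨p.1 + 1, window τ (extensionStart t (firstOccurrence τ p)) (p.1 + 1)⟩

variable {τ}

@[simp]
theorem extendAwayFrom_fst (t : ℕ) (p : PermS) : (extendAwayFrom τ t p).1 = p.1 + 1 := rfl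

theorem occursAt_extendAwayFrom {t : ℕ} {p : PermS} (hp : pLE p ⟨n, τ⟩)
    (hpt : firstOccurrence τ p ≠ t) (ht : t + p.1 ≤ n) :
    OccursAt (extendAwayFrom τ t p).2 τ (extensionStart t (firstOccurrence τ p)) :=
  occursAt_window_s8 τ (extensionStart_add_le hpt (firstOccurrence_add_le hp) ht)

theorem occursAt_of_extendAwayFrom {t : ℕ} {p : PermS} (hp : pLE p ⟨n, τ⟩)
    (hpt : firstOccurrence τ p ≠ t) (ht : t + p.1 ≤ n) :
    OccursAt p.2 (extendAwayFrom τ t p).2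
      (firstOccurrence τ p - extensionStart t (firstOccurrence τ p)) := by
  have := le_extensionStart_add_one t (firstOccurrence τ p)
  refine OccursAt.in_window ?_ (by rw [extendAwayFrom_fst]; omega)
    (extensionStart_add_le hpt (firstOccurrence_add_le hp) ht)
  rw [Nat.add_sub_cancel' (extensionStart_le _ _)]
  exact occursAt_firstOccurrence hp

theorem lt_extendAwayFrom {t : ℕ} {p : PermS} (hp : pLE p ⟨n, τ⟩)
    (hpt : firstOccurrence τ p ≠ t) (ht : t + p.1 ≤ n) : pLT p (extendAwayFrom τ t p) :=
  ⟨⟨_, occursAt_of_extendAwayFrom hp hpt ht⟩, fun h => by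
    simpa using congrArg Sigma.fst h⟩

theorem extensionStart_le_of_extendAwayFrom_eq {t : ℕ} {p q : PermS}
    (hp : pLE p ⟨n, τ⟩) (hpt : firstOccurrence τ p ≠ t) (hpn : t + p.1 ≤ n)
    (hq : pLE q ⟨n, τ⟩) (hqt : firstOccurrence τ q ≠ t) (hqn : t + q.1 ≤ n)
    (h : extendAwayFrom τ t p = extendAwayFrom τ t q) :
    extensionStart t (firstOccurrence τ q) ≤ extensionStart t (firstOccurrence τ p) := by
  have hw := occursAt_extendAwayFrom hp hpt hpn
  rw [h] at hw
  have := firstOccurrence_le ((occursAt_of_extendAwayFrom hq hqt hqn).trans hw)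
  have := extensionStart_le t (firstOccurrence τ q)
  omega

theorem extendAwayFrom_injOn {t : ℕ} {S : Set PermS}
    (hS : ∀ p ∈ S, pLE p ⟨n, τ⟩ ∧ firstOccurrence τ p ≠ t ∧ t + p.1 ≤ n) :
    S.InjOn (extendAwayFrom τ t) := by
  intro p hp q hq hpq
  obtain ⟨hpτ, hpt, hpn⟩ := hS p hp
  obtain ⟨hqτ, hqt, hqn⟩ := hS q hq
  have hlen : p.1 = q.1 := by simpa using congrArg Sigma.fst hpq
  have hstart := le_antisymm
    (extensionStart_le_of_extendAwayFrom_eq hqτ hqt hqn hpτ hpt hpn hpq.symm)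
    (extensionStart_le_of_extendAwayFrom_eq hpτ hpt hpn hqτ hqt hqn hpq)
  exact PermS.eq_of_firstOccurrence_eq hpτ hqτ hlen (extensionStart_injOn t hpt hqt hstart)

theorem exists_injOn_lt_of_card_le {k : ℕ} {S : Finset PermS}
    (hS : ∀ p ∈ S, pLE p ⟨n, τ⟩ ∧ p.1 = k) (hcard : S.card ≤ n - k) :
    ∃ f : PermS → PermS, Set.InjOn f S ∧
      ∀ p ∈ S, pLT p (f p) ∧ pLE (f p) ⟨n, τ⟩ ∧ (f p).1 = k + 1 := by
  obtain ⟨t, ht, htS⟩ := Finset.exists_mem_notMem_of_card_lt_card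
    (s := S.image (firstOccurrence τ)) (t := Finset.range (n - k + 1))
    (by rw [Finset.card_range]; exact Finset.card_image_le.trans_lt (by omega))
  rw [Finset.mem_range] at ht
  have hpt : ∀ p ∈ S, firstOccurrence τ p ≠ t := fun p hp h =>
    htS (Finset.mem_image.2 ⟨p, hp, h⟩)
  have hS' : ∀ p ∈ S, t + p.1 ≤ n := fun p hp => by
    have := firstOccurrence_add_le (hS p hp).1
    have := (hS p hp).2
    omega
  refine ⟨extendAwayFrom τ t,
    extendAwayFrom_injOn fun p hp => ⟨(hS p hp).1, hpt p hp, hS' p hp⟩,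
    fun p hp => ⟨lt_extendAwayFrom (hS p hp).1 (hpt p hp) (hS' p hp),
      ⟨_, occursAt_extendAwayFrom (hS p hp).1 (hpt p hp) (hS' p hp)⟩, by simp [(hS p hp).2]⟩⟩

end Extension

theorem stmt8_general {m n : ℕ} (σ : Perm' m) (τ : Perm' n)
    (r : ℕ) (S : Finset PermS)
    (hS : ∀ p ∈ S, pLE ⟨m, σ⟩ p ∧ pLE p ⟨n, τ⟩ ∧ p.1 = m + r)
    (hcard : S.card ≤ n - m - r) :
    ∃ f : PermS → PermS, Set.InjOn f S ∧
      ∀ p ∈ S, (pLE ⟨m, σ⟩ (f p) ∧ pLE (f p) ⟨n, τ⟩ ∧ (f p).1 = m + (r + 1)) ∧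
        pLT p (f p) := by
  obtain ⟨f, hinj, hf⟩ := exists_injOn_lt_of_card_le (τ := τ) (k := m + r)
    (fun p hp => (hS p hp).2) (by omega)
  refine ⟨f, hinj, fun p hp => ?_⟩
  obtain ⟨hlt, hle, hlen⟩ := hf p hp
  exact ⟨⟨pLE_trans_s8 (hS p hp).1 hlt.1, hle, hlen⟩, hlt⟩

/-- Lemma 5.2: for `σ ≤ τ`, `N = |τ| - |σ|`, `0 ≤ r ≤ N - 1`, and any
choice `S` of at most `N - r` elements of rank `r` of `[σ,τ]`, there is an injection `f`
of `S` into the elements of rank `r+1` with `π < f π` for all `π ∈ S`. -/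
theorem stmt8 {m n : ℕ} (hm : 1 ≤ m) (σ : Perm' m) (τ : Perm' n) (hle : PattLE σ τ)
    (r : ℕ) (hr : r + 1 ≤ n - m) (S : Finset PermS)
    (hS : ∀ p ∈ S, pLE ⟨m, σ⟩ p ∧ pLE p ⟨n, τ⟩ ∧ p.1 = m + r)
    (hcard : S.card ≤ n - m - r) :
    ∃ f : PermS → PermS, Set.InjOn f S ∧
      ∀ p ∈ S, (pLE ⟨m, σ⟩ (f p) ∧ pLE (f p) ⟨n, τ⟩ ∧ (f p).1 = m + (r + 1)) ∧
        pLT p (f p) :=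
  stmt8_general σ τ r S hS hcard

end
end
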